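/- arXiv:1301.7511 — 2 statements merged into one kernel-verified Lean document; each statement's English description precedes it below -/
import Mathlib

section
/- Let S be a Young tableau of shape μ with entries in a finite set, and let a be an element not appearing in S. For a column index j, let z_j = ∑_{b ∈ C_j(S)} (a,b) in the group algebra. If i ≠ j are column indices with μ'_i ≤ μ'_j, then c_μ(S) · z_i · z_j = c_μ(S) · z_i. -/
open scoped Classical

/-- The row symmetrizer `a_μ(T) = ∑_{σ ∈ R_T} σ` of a Young tableau `T : D_μ → A`:
the sum of all permutations of `A` which fix every element outside the image of `T`
and map the entries of each row of `T` to entries of the same row. -/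
noncomputable def aRow (K : Type*) [Field K] {A : Type*} [Fintype A] [DecidableEq A]
    (μ : YoungDiagram) (T : μ.cells → A) : MonoidAlgebra K (Equiv.Perm A) :=
  ∑ σ ∈ Finset.univ.filter (fun σ : Equiv.Perm A =>
      (∀ x : A, (∀ c : μ.cells, T c ≠ x) → σ x = x) ∧
      ∀ c : μ.cells, ∃ c' : μ.cells, (c' : ℕ × ℕ).1 = (c : ℕ × ℕ).1 ∧ σ (T c) = T c'),
    MonoidAlgebra.single σ 1

/-- The column antisymmetrizer `b_μ(T) = ∑_{τ ∈ C_T} sgn(τ)·τ` of a Young tableau. -/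
noncomputable def bCol (K : Type*) [Field K] {A : Type*} [Fintype A] [DecidableEq A]
    (μ : YoungDiagram) (T : μ.cells → A) : MonoidAlgebra K (Equiv.Perm A) :=
  ∑ τ ∈ Finset.univ.filter (fun τ : Equiv.Perm A =>
      (∀ x : A, (∀ c : μ.cells, T c ≠ x) → τ x = x) ∧
      ∀ c : μ.cells, ∃ c' : μ.cells, (c' : ℕ × ℕ).2 = (c : ℕ × ℕ).2 ∧ τ (T c) = T c'),
    MonoidAlgebra.single τ ((Equiv.Perm.sign τ : ℤ) : K)

/-- The Young symmetrizer `c_μ(T) = a_μ(T) · b_μ(T)`. -/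
noncomputable def youngSymm (K : Type*) [Field K] {A : Type*} [Fintype A] [DecidableEq A]
    (μ : YoungDiagram) (T : μ.cells → A) : MonoidAlgebra K (Equiv.Perm A) :=
  aRow K μ T * bCol K μ T

/-- The set of entries in column `j` of the tableau `T`. -/
noncomputable def colSet {A : Type*} [Fintype A] [DecidableEq A]
    (μ : YoungDiagram) (T : μ.cells → A) (j : ℕ) : Finset A :=
  Finset.univ.filter (fun x : A => ∃ c : μ.cells, (c : ℕ × ℕ).2 = j ∧ T c = x)

/-- `z_j = ∑_{b ∈ C_j(S)} (a,b)` in the group algebra. -/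
noncomputable def zCol (K : Type*) [Field K] {A : Type*} [Fintype A] [DecidableEq A]
    (μ : YoungDiagram) (T : μ.cells → A) (a : A) (j : ℕ) :
    MonoidAlgebra K (Equiv.Perm A) :=
  ∑ b ∈ colSet μ T j, MonoidAlgebra.single (Equiv.swap a b) (1 : K)

/-- `α_μ`: the product of all hook lengths of the Young diagram `μ`. -/
def hookProd (μ : YoungDiagram) : ℕ :=
  ∏ c ∈ μ.cells, (μ.rowLen c.1 - c.2 + (μ.colLen c.2 - c.1) - 1)

set_option linter.unusedSectionVars false

section Aux

variable {K : Type*} [Field K] {A : Type*} [Fintype A] [DecidableEq A]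
  {μ : YoungDiagram} {S : μ.cells → A}

def RowPred (S : μ.cells → A) (σ : Equiv.Perm A) : Prop :=
  (∀ x : A, (∀ c : μ.cells, S c ≠ x) → σ x = x) ∧
  ∀ c : μ.cells, ∃ c' : μ.cells, (c' : ℕ × ℕ).1 = (c : ℕ × ℕ).1 ∧ σ (S c) = S c'

def ColPred (S : μ.cells → A) (σ : Equiv.Perm A) : Prop :=
  (∀ x : A, (∀ c : μ.cells, S c ≠ x) → σ x = x) ∧
  ∀ c : μ.cells, ∃ c' : μ.cells, (c' : ℕ × ℕ).2 = (c : ℕ × ℕ).2 ∧ σ (S c) = S c'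

lemma aRow_def (K : Type*) [Field K] (μ : YoungDiagram) (S : μ.cells → A) :
    aRow K μ S = ∑ σ ∈ Finset.univ.filter (RowPred S), MonoidAlgebra.single σ 1 := by
  unfold aRow RowPred
  exact Finset.sum_congr (by convert rfl using 2 <;> exact Subsingleton.elim _ _) (fun _ _ => rfl)

lemma bCol_def (K : Type*) [Field K] (μ : YoungDiagram) (S : μ.cells → A) :
    bCol K μ S = ∑ τ ∈ Finset.univ.filter (ColPred S),
      MonoidAlgebra.single τ ((Equiv.Perm.sign τ : ℤ) : K) := by
  unfold bCol ColPred
  exact Finset.sum_congr (by convert rfl using 2 <;> exact Subsingleton.elim _ _) (fun _ _ => rfl)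

lemma RowPred.mul {σ τ : Equiv.Perm A} (hσ : RowPred S σ) (hτ : RowPred S τ) :
    RowPred S (σ * τ) := by
  constructor
  · intro x hx
    simp only [Equiv.Perm.mul_apply, hτ.1 x hx, hσ.1 x hx]
  · intro c
    obtain ⟨c', h1, h2⟩ := hτ.2 c
    obtain ⟨c'', h3, h4⟩ := hσ.2 c'
    exact ⟨c'', by rw [h3, h1], by rw [Equiv.Perm.mul_apply, h2, h4]⟩

lemma ColPred.mul {σ τ : Equiv.Perm A} (hσ : ColPred S σ) (hτ : ColPred S τ) :
    ColPred S (σ * τ) := by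
  constructor
  · intro x hx
    simp only [Equiv.Perm.mul_apply, hτ.1 x hx, hσ.1 x hx]
  · intro c
    obtain ⟨c', h1, h2⟩ := hτ.2 c
    obtain ⟨c'', h3, h4⟩ := hσ.2 c'
    exact ⟨c'', by rw [h3, h1], by rw [Equiv.Perm.mul_apply, h2, h4]⟩

lemma rowPred_swap (hS : Function.Injective S) {c₁ c₂ : μ.cells}
    (h : (c₁ : ℕ × ℕ).1 = (c₂ : ℕ × ℕ).1) : RowPred S (Equiv.swap (S c₁) (S c₂)) := by
  constructor
  · intro x hx
    exact Equiv.swap_apply_of_ne_of_ne (Ne.symm (hx c₁)) (Ne.symm (hx c₂))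
  · intro c
    by_cases h1 : c = c₁
    · subst h1; exact ⟨c₂, h.symm, Equiv.swap_apply_left _ _⟩
    by_cases h2 : c = c₂
    · subst h2; exact ⟨c₁, h, Equiv.swap_apply_right _ _⟩
    exact ⟨c, rfl, Equiv.swap_apply_of_ne_of_ne (fun e => h1 (hS e)) (fun e => h2 (hS e))⟩

lemma colPred_swap (hS : Function.Injective S) {c₁ c₂ : μ.cells}
    (h : (c₁ : ℕ × ℕ).2 = (c₂ : ℕ × ℕ).2) : ColPred S (Equiv.swap (S c₁) (S c₂)) := by
  constructor
  · intro x hx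
    exact Equiv.swap_apply_of_ne_of_ne (Ne.symm (hx c₁)) (Ne.symm (hx c₂))
  · intro c
    by_cases h1 : c = c₁
    · subst h1; exact ⟨c₂, h.symm, Equiv.swap_apply_left _ _⟩
    by_cases h2 : c = c₂
    · subst h2; exact ⟨c₁, h, Equiv.swap_apply_right _ _⟩
    exact ⟨c, rfl, Equiv.swap_apply_of_ne_of_ne (fun e => h1 (hS e)) (fun e => h2 (hS e))⟩

lemma mem_colSet {x : A} {j : ℕ} :
    x ∈ colSet μ S j ↔ ∃ c : μ.cells, (c : ℕ × ℕ).2 = j ∧ S c = x := by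
  simp [colSet]

lemma colSet_ne (hS : Function.Injective S) {i j : ℕ} (hij : i ≠ j) {b b' : A}
    (hb : b ∈ colSet μ S i) (hb' : b' ∈ colSet μ S j) : b ≠ b' := by
  rintro rfl
  obtain ⟨c, hc, hcS⟩ := mem_colSet.1 hb
  obtain ⟨c', hc', hcS'⟩ := mem_colSet.1 hb'
  apply hij
  rw [← hc, ← hc', hS (hcS.trans hcS'.symm)]

lemma ColPred.maps {τ : Equiv.Perm A} (hτ : ColPred S τ) {b : A} {j : ℕ}
    (hb : b ∈ colSet μ S j) : τ b ∈ colSet μ S j := by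
  obtain ⟨c, hc, hcS⟩ := mem_colSet.1 hb
  obtain ⟨c', h1, h2⟩ := hτ.2 c
  exact mem_colSet.2 ⟨c', by rw [h1, hc], by rw [← h2, hcS]⟩

lemma ColPred.inv_maps {τ : Equiv.Perm A} (hτ : ColPred S τ) {y : A} {j : ℕ}
    (hy : y ∈ colSet μ S j) : τ⁻¹ y ∈ colSet μ S j := by
  have himg : (colSet μ S j).image τ = colSet μ S j := by
    apply Finset.eq_of_subset_of_card_le
    · intro x hx
      obtain ⟨b, hb, rfl⟩ := Finset.mem_image.1 hx
      exact hτ.maps hb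
    · rw [Finset.card_image_of_injective _ τ.injective]
  rw [← himg] at hy
  obtain ⟨b, hb, hbe⟩ := Finset.mem_image.1 hy
  rw [← hbe, ← Equiv.Perm.mul_apply, inv_mul_cancel, Equiv.Perm.one_apply]
  exact hb


noncomputable def rowOf (S : μ.cells → A) (x : A) : ℕ :=
  if h : ∃ c : μ.cells, S c = x then ((h.choose : μ.cells) : ℕ × ℕ).1 else 0

lemma rowOf_eq (hS : Function.Injective S) (c : μ.cells) : rowOf S (S c) = (c : ℕ × ℕ).1 := by
  have h : ∃ c' : μ.cells, S c' = S c := ⟨c, rfl⟩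
  rw [rowOf, dif_pos h, hS h.choose_spec]

noncomputable def yval (S : μ.cells → A) (j : ℕ) (x : A) : A :=
  if h : (rowOf S x, j) ∈ μ then S ⟨(rowOf S x, j), (YoungDiagram.mem_cells _).2 h⟩ else x

lemma yval_spec (hS : Function.Injective S) {i j : ℕ} (hcol : μ.colLen i ≤ μ.colLen j)
    {u : A} (hu : u ∈ colSet μ S i) :
    ∃ c d : μ.cells, S c = u ∧ (c : ℕ × ℕ).2 = i ∧ (d : ℕ × ℕ).1 = (c : ℕ × ℕ).1 ∧
      (d : ℕ × ℕ).2 = j ∧ S d = yval S j u := by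
  obtain ⟨c, hc2, hcu⟩ := mem_colSet.1 hu
  have hrow : rowOf S u = (c : ℕ × ℕ).1 := by rw [← hcu, rowOf_eq hS]
  have hmem : ((c : ℕ × ℕ).1, j) ∈ μ := by
    rw [YoungDiagram.mem_iff_lt_colLen]
    refine lt_of_lt_of_le ?_ hcol
    rw [← hc2, ← YoungDiagram.mem_iff_lt_colLen]
    have := (YoungDiagram.mem_cells _).1 c.2
    simpa using this
  refine ⟨c, ⟨((c : ℕ × ℕ).1, j), (YoungDiagram.mem_cells _).2 hmem⟩, hcu, hc2, rfl, rfl, ?_⟩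
  simp only [yval, hrow]
  rw [dif_pos hmem]

lemma aRow_mul_single (t : Equiv.Perm A) (ht : RowPred S t) (htt : t * t = 1) :
    aRow K μ S * MonoidAlgebra.single t (1 : K) = aRow K μ S := by
  rw [aRow_def, Finset.sum_mul]
  simp only [MonoidAlgebra.single_mul_single, mul_one]
  refine Finset.sum_nbij' (fun σ => σ * t) (fun σ => σ * t) ?_ ?_ ?_ ?_ ?_
  · intro σ hσ
    simp only [Finset.mem_filter, Finset.mem_univ, true_and] at hσ ⊢
    exact RowPred.mul hσ ht
  · intro σ hσ
    simp only [Finset.mem_filter, Finset.mem_univ, true_and] at hσ ⊢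
    exact RowPred.mul hσ ht
  · intro σ _; rw [mul_assoc, htt, mul_one]
  · intro σ _; rw [mul_assoc, htt, mul_one]
  · intro σ _; rfl

lemma aRow_single_absorb (t : Equiv.Perm A) (ht : RowPred S t) (htt : t * t = 1)
    (σ : Equiv.Perm A) (κ : K) :
    aRow K μ S * MonoidAlgebra.single (t * σ) κ = aRow K μ S * MonoidAlgebra.single σ κ := by
  have h : MonoidAlgebra.single (t * σ) κ
      = MonoidAlgebra.single t (1 : K) * MonoidAlgebra.single σ κ := by
    rw [MonoidAlgebra.single_mul_single, one_mul]
  rw [h, ← mul_assoc, aRow_mul_single t ht htt]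

lemma swap3 {b b' c : A} (h1 : b ≠ b') (h2 : b ≠ c) (h3 : b' ≠ c) :
    Equiv.swap b' c * Equiv.swap b c = Equiv.swap b c * Equiv.swap b b' := by
  ext x
  simp only [Equiv.Perm.mul_apply, Equiv.swap_apply_def]
  split_ifs <;> simp_all


lemma sign_cast_mul_swap {τ : Equiv.Perm A} {b' c : A} (h : b' ≠ c) (K : Type*) [Field K] :
    (((Equiv.Perm.sign (τ * Equiv.swap b' c)) : ℤ) : K)
      = -(((Equiv.Perm.sign τ) : ℤ) : K) := by
  rw [Equiv.Perm.sign_mul, Equiv.Perm.sign_swap h]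
  push_cast
  ring

end Aux

section Aux2

variable {K : Type*} [Field K] {A : Type*} [Fintype A] [DecidableEq A]
  {μ : YoungDiagram} {S : μ.cells → A}

lemma youngSymm_mul_wb (hS : Function.Injective S) {i j : ℕ} (hij : i ≠ j)
    (hcol : μ.colLen i ≤ μ.colLen j) {b : A} (hb : b ∈ colSet μ S i) :
    (aRow K μ S * bCol K μ S) *
        (∑ b' ∈ colSet μ S j, MonoidAlgebra.single (Equiv.swap b b') (1 : K))
      = aRow K μ S * bCol K μ S := by
  classical
  set g : Equiv.Perm A → A := fun τ => τ⁻¹ (yval S j (τ b)) with hg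
  have hgmem : ∀ τ : Equiv.Perm A, ColPred S τ → g τ ∈ colSet μ S j := by
    intro τ hτ
    obtain ⟨c, d, _, _, _, hd2, hdy⟩ := yval_spec hS hcol (hτ.maps hb)
    exact hτ.inv_maps (mem_colSet.2 ⟨d, hd2, hdy⟩)
  have habs : ∀ τ : Equiv.Perm A, ColPred S τ → ∀ (σ : Equiv.Perm A) (κ : K),
      aRow K μ S * MonoidAlgebra.single (Equiv.swap (τ b) (yval S j (τ b)) * σ) κ
        = aRow K μ S * MonoidAlgebra.single σ κ := by
    intro τ hτ σ κ
    obtain ⟨c, d, hcu, _, hd1, _, hdy⟩ := yval_spec hS hcol (hτ.maps hb)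
    have h1 : Equiv.swap (τ b) (yval S j (τ b)) = Equiv.swap (S c) (S d) := by rw [hcu, hdy]
    rw [h1]
    exact aRow_single_absorb _ (rowPred_swap hS hd1.symm) (Equiv.swap_mul_self _ _) σ κ
  have htgy : ∀ τ : Equiv.Perm A, τ (g τ) = yval S j (τ b) := by
    intro τ; simp [hg]
  have hdiag : ∀ τ : Equiv.Perm A, ColPred S τ → ∀ κ : K,
      aRow K μ S * MonoidAlgebra.single (τ * Equiv.swap b (g τ)) κ
        = aRow K μ S * MonoidAlgebra.single τ κ := by
    intro τ hτ κ
    rw [Equiv.mul_swap_eq_swap_mul, htgy τ, habs τ hτ]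
  have hoff : ∀ τ : Equiv.Perm A, ColPred S τ → ∀ b' ∈ colSet μ S j, b' ≠ g τ → ∀ κ : K,
      aRow K μ S * MonoidAlgebra.single (τ * Equiv.swap b' (g τ) * Equiv.swap b (g τ)) κ
        = aRow K μ S * MonoidAlgebra.single (τ * Equiv.swap b b') κ := by
    intro τ hτ b' hb' hbg κ
    have hbb' : b ≠ b' := colSet_ne hS hij hb hb'
    have hbgτ : b ≠ g τ := colSet_ne hS hij hb (hgmem τ hτ)
    have key : τ * Equiv.swap b' (g τ) * Equiv.swap b (g τ)
        = Equiv.swap (τ b) (yval S j (τ b)) * (τ * Equiv.swap b b') := by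
      rw [mul_assoc, swap3 hbb' hbgτ hbg, ← mul_assoc,
        Equiv.mul_swap_eq_swap_mul τ b (g τ), htgy τ, mul_assoc]
    rw [key, habs τ hτ]
  have hginv : ∀ (τ : Equiv.Perm A) (b' : A), b ≠ b' → b ≠ g τ →
      g (τ * Equiv.swap b' (g τ)) = b' := by
    intro τ b' h1 h2
    have hb'' : (τ * Equiv.swap b' (g τ)) b = τ b := by
      rw [Equiv.Perm.mul_apply, Equiv.swap_apply_of_ne_of_ne h1 h2]
    simp only [hg]
    simp only [hg] at hb''
    rw [hb'', mul_inv_rev, Equiv.Perm.mul_apply, Equiv.swap_inv, Equiv.swap_apply_right]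
  have hbC : aRow K μ S * bCol K μ S = ∑ τ ∈ Finset.univ.filter (ColPred S),
      aRow K μ S * MonoidAlgebra.single τ ((Equiv.Perm.sign τ : ℤ) : K) := by
    rw [bCol_def, Finset.mul_sum]
  rw [hbC, Finset.sum_mul]
  have step1 : ∀ τ ∈ Finset.univ.filter (ColPred S),
      (aRow K μ S * MonoidAlgebra.single τ ((Equiv.Perm.sign τ : ℤ) : K)) *
          (∑ b' ∈ colSet μ S j, MonoidAlgebra.single (Equiv.swap b b') (1 : K))
        = aRow K μ S * MonoidAlgebra.single τ ((Equiv.Perm.sign τ : ℤ) : K)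
          + ∑ b' ∈ colSet μ S j, (if b' = g τ then 0 else
              aRow K μ S * MonoidAlgebra.single (τ * Equiv.swap b b')
                ((Equiv.Perm.sign τ : ℤ) : K)) := by
    intro τ hτ'
    have hτ : ColPred S τ := (Finset.mem_filter.1 hτ').2
    rw [Finset.mul_sum]
    have e1 : ∀ b' ∈ colSet μ S j,
        (aRow K μ S * MonoidAlgebra.single τ ((Equiv.Perm.sign τ : ℤ) : K)) *
            MonoidAlgebra.single (Equiv.swap b b') (1 : K)
          = (if b' = g τ then aRow K μ S * MonoidAlgebra.single τ ((Equiv.Perm.sign τ : ℤ) : K)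
              else 0)
            + (if b' = g τ then 0 else
              aRow K μ S * MonoidAlgebra.single (τ * Equiv.swap b b')
                ((Equiv.Perm.sign τ : ℤ) : K)) := by
      intro b' _
      rw [mul_assoc, MonoidAlgebra.single_mul_single, mul_one]
      by_cases h : b' = g τ
      · subst h; rw [if_pos rfl, if_pos rfl, add_zero, hdiag τ hτ]
      · rw [if_neg h, if_neg h, zero_add]
    rw [Finset.sum_congr rfl e1, Finset.sum_add_distrib,
      Finset.sum_ite_eq' (colSet μ S j) (g τ), if_pos (hgmem τ hτ)]
  rw [Finset.sum_congr rfl step1, Finset.sum_add_distrib, ← hbC]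
  have hR : (∑ τ ∈ Finset.univ.filter (ColPred S), ∑ b' ∈ colSet μ S j,
      (if b' = g τ then 0 else aRow K μ S * MonoidAlgebra.single (τ * Equiv.swap b b')
        ((Equiv.Perm.sign τ : ℤ) : K))) = 0 := by
    rw [← Finset.sum_product']
    refine Finset.sum_involution
      (fun p _ => if p.2 = g p.1 then p else (p.1 * Equiv.swap p.2 (g p.1), g p.1))
      ?_ ?_ ?_ ?_
    · rintro ⟨τ, b'⟩ hp
      simp only [Finset.mem_product, Finset.mem_filter, Finset.mem_univ, true_and] at hp
      obtain ⟨hτ, hb'⟩ := hp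
      by_cases h : b' = g τ
      · simp [h]
      · have hbb' : b ≠ b' := colSet_ne hS hij hb hb'
        have hbgτ : b ≠ g τ := colSet_ne hS hij hb (hgmem τ hτ)
        have hgnew : g (τ * Equiv.swap b' (g τ)) = b' := hginv τ b' hbb' hbgτ
        simp only [if_neg h]
        have hcond : ¬ (g τ = g (τ * Equiv.swap b' (g τ))) := by
          rw [hgnew]; exact fun e => h e.symm
        simp only [if_neg hcond]
        rw [sign_cast_mul_swap h K, hoff τ hτ b' hb' h, ← mul_add,
          ← MonoidAlgebra.single_add]
        simp
    · rintro ⟨τ, b'⟩ hp hne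
      by_cases h : b' = g τ
      · exfalso; apply hne; simp [h]
      · intro e
        simp only [if_neg h, Prod.mk.injEq] at e
        exact h e.2.symm
    · rintro ⟨τ, b'⟩ hp
      simp only [Finset.mem_product, Finset.mem_filter, Finset.mem_univ, true_and] at hp ⊢
      obtain ⟨hτ, hb'⟩ := hp
      by_cases h : b' = g τ
      · simp only [if_pos h]; exact ⟨hτ, hb'⟩
      · simp only [if_neg h]
        refine ⟨?_, hgmem τ hτ⟩
        obtain ⟨c₁, hc₁, hSc₁⟩ := mem_colSet.1 hb'
        obtain ⟨c₂, hc₂, hSc₂⟩ := mem_colSet.1 (hgmem τ hτ)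
        have hsw : Equiv.swap b' (g τ) = Equiv.swap (S c₁) (S c₂) := by rw [hSc₁, hSc₂]
        rw [hsw]
        exact hτ.mul (colPred_swap hS (by rw [hc₁, hc₂]))
    · rintro ⟨τ, b'⟩ hp
      simp only [Finset.mem_product, Finset.mem_filter, Finset.mem_univ, true_and] at hp
      obtain ⟨hτ, hb'⟩ := hp
      by_cases h : b' = g τ
      · simp only [if_pos h]
      · have hbb' : b ≠ b' := colSet_ne hS hij hb hb'
        have hbgτ : b ≠ g τ := colSet_ne hS hij hb (hgmem τ hτ)
        have hgnew : g (τ * Equiv.swap b' (g τ)) = b' := hginv τ b' hbb' hbgτ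
        simp only [if_neg h]
        have hcond : ¬ (g τ = g (τ * Equiv.swap b' (g τ))) := by
          rw [hgnew]; exact fun e => h e.symm
        have hcond' : ¬ (g τ = b') := fun e => h e.symm
        simp only [hgnew]
        rw [if_neg hcond', Equiv.swap_comm (g τ) b', Equiv.mul_swap_mul_self]
  rw [hR, add_zero]


lemma single_swap_mul_zw (hS : Function.Injective S) {a : A} (ha : ∀ c : μ.cells, S c ≠ a)
    {i j : ℕ} (hij : i ≠ j) {b : A} (hb : b ∈ colSet μ S i) :
    MonoidAlgebra.single (Equiv.swap a b) (1 : K) *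
        (∑ b' ∈ colSet μ S j, MonoidAlgebra.single (Equiv.swap a b') (1 : K))
      = (∑ b' ∈ colSet μ S j, MonoidAlgebra.single (Equiv.swap b b') (1 : K)) *
          MonoidAlgebra.single (Equiv.swap a b) (1 : K) := by
  rw [Finset.mul_sum, Finset.sum_mul]
  refine Finset.sum_congr rfl ?_
  intro b' hb'
  rw [MonoidAlgebra.single_mul_single, MonoidAlgebra.single_mul_single, one_mul]
  congr 1
  have hba : b' ≠ a := by
    obtain ⟨c, _, hc⟩ := mem_colSet.1 hb'
    exact fun e => ha c (hc.trans e)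
  have hbb : b' ≠ b := (colSet_ne hS hij hb hb').symm
  rw [Equiv.mul_swap_eq_swap_mul (Equiv.swap a b) a b', Equiv.swap_apply_left,
    Equiv.swap_apply_of_ne_of_ne hba hbb]

end Aux2


/-- if `μ'_i ≤ μ'_j` and `i ≠ j` then `c_μ(S)·z_i·z_j = c_μ(S)·z_i`,
where `z_j = ∑_{b ∈ C_j(S)} (a,b)` and `a` is not an entry of `S`. -/
theorem youngSymm_zi_zj (K : Type*) [Field K] [CharZero K] {A : Type*} [Fintype A]
    [DecidableEq A] (μ : YoungDiagram) (S : μ.cells → A) (hS : Function.Injective S)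
    (a : A) (ha : ∀ c : μ.cells, S c ≠ a)
    (i j : ℕ) (hij : i ≠ j) (hcol : μ.colLen i ≤ μ.colLen j) :
    youngSymm K μ S * zCol K μ S a i * zCol K μ S a j
      = youngSymm K μ S * zCol K μ S a i := by
  rw [youngSymm, show zCol K μ S a i
      = ∑ b ∈ colSet μ S i, MonoidAlgebra.single (Equiv.swap a b) (1 : K) from rfl,
    Finset.mul_sum, Finset.sum_mul]
  refine Finset.sum_congr rfl ?_
  intro b hb
  rw [mul_assoc, show zCol K μ S a j
      = ∑ b' ∈ colSet μ S j, MonoidAlgebra.single (Equiv.swap a b') (1 : K) from rfl,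
    single_swap_mul_zw hS ha hij hb, ← mul_assoc, youngSymm_mul_wb hS hij hcol hb]
end

section
/- Let S be a Young tableau of shape μ with entry set A₀ and a ∉ A₀. Let b₁, …, b_k (k ≥ 2) be entries of S lying in strictly increasing distinct columns j₁ < ⋯ < j_k, and let σ be the cycle (a, b_k, b_{k−1}, …, b₁) ∈ S_{A₀ ∪ {a}}. If b₁ and b₂ lie in different rows of S, then c_μ(S) · σ · c_μ(S) = 0. -/
open scoped Classical

set_option linter.unusedSectionVars false


section
variable {A : Type*} [Fintype A] [DecidableEq A]

lemma swapProd_fixed (a : A) (l : List A) (x : A) (hx : x ≠ a) (hxl : x ∉ l) :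
    (l.map (fun b => Equiv.swap a b)).prod x = x := by
  induction l with
  | nil => simp
  | cons b t ih =>
    simp only [List.mem_cons, not_or] at hxl
    simp only [List.map_cons, List.prod_cons, Equiv.Perm.mul_apply]
    rw [ih hxl.2]
    exact Equiv.swap_apply_of_ne_of_ne hx hxl.1

lemma swapProd_val (a b₁ b₂ : A) (t : List A) (hab : a ∉ b₁ :: b₂ :: t)
    (hnd : (b₁ :: b₂ :: t).Nodup) :
    ((b₁ :: b₂ :: t).map (fun b => Equiv.swap a b)).prod b₂ = b₁ := by
  simp only [List.mem_cons, not_or] at hab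
  simp only [List.nodup_cons, List.mem_cons, not_or] at hnd
  simp only [List.map_cons, List.prod_cons, Equiv.Perm.mul_apply]
  rw [swapProd_fixed a t b₂ (fun h => hab.2.1 h.symm) hnd.2.1,
    Equiv.swap_apply_right, Equiv.swap_apply_left]
end

section
variable {A : Type*} [Fintype A] [DecidableEq A] {μ : YoungDiagram}

/-- generic stabilizer predicate: `f` is the row (or column) projection. -/
def StabPred (f : μ.cells → ℕ) (T : μ.cells → A) (σ : Equiv.Perm A) : Prop :=
  (∀ x : A, (∀ c : μ.cells, T c ≠ x) → σ x = x) ∧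
  ∀ c : μ.cells, ∃ c' : μ.cells, f c' = f c ∧ σ (T c) = T c'

lemma stab_mul {f : μ.cells → ℕ} {T : μ.cells → A} {σ τ : Equiv.Perm A}
    (hσ : StabPred f T σ) (hτ : StabPred f T τ) : StabPred f T (σ * τ) := by
  constructor
  · intro x hx
    simp [Equiv.Perm.mul_apply, hτ.1 x hx, hσ.1 x hx]
  · intro c
    obtain ⟨c', hc', hτc⟩ := hτ.2 c
    obtain ⟨c'', hc'', hσc⟩ := hσ.2 c'
    exact ⟨c'', hc''.trans hc', by simp [Equiv.Perm.mul_apply, hτc, hσc]⟩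

lemma stab_inv {f : μ.cells → ℕ} {T : μ.cells → A} {σ : Equiv.Perm A}
    (hσ : StabPred f T σ) : StabPred f T σ⁻¹ := by
  constructor
  · intro x hx
    have h := hσ.1 x hx
    conv_lhs => rw [← h]
    simp
  · intro c
    set F : Finset A := Finset.univ.filter (fun x => ∃ c' : μ.cells, f c' = f c ∧ T c' = x) with hF
    have hsub : F.image σ ⊆ F := by
      intro y hy
      simp only [hF, Finset.mem_image, Finset.mem_filter, Finset.mem_univ, true_and] at hy ⊢
      obtain ⟨x, ⟨c', hc', hTc'⟩, rfl⟩ := hy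
      obtain ⟨c'', hc'', hσc⟩ := hσ.2 c'
      exact ⟨c'', hc''.trans hc', by rw [← hTc', hσc]⟩
    have himg : F.image σ = F :=
      Finset.eq_of_subset_of_card_le hsub
        (le_of_eq (Finset.card_image_of_injective F σ.injective).symm)
    have hmem : T c ∈ F := by
      simp only [hF, Finset.mem_filter, Finset.mem_univ, true_and]
      exact ⟨c, rfl, rfl⟩
    rw [← himg, Finset.mem_image] at hmem
    obtain ⟨y, hy, hσy⟩ := hmem
    simp only [hF, Finset.mem_filter, Finset.mem_univ, true_and] at hy
    obtain ⟨c', hc', hTc'⟩ := hy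
    refine ⟨c', hc', ?_⟩
    rw [← hσy]
    simp [hTc']

lemma filter_image_left {G : Type*} [Group G] [Fintype G] [DecidableEq G] (P : G → Prop)
    (hmul : ∀ {σ τ}, P σ → P τ → P (σ * τ)) (hinv : ∀ {σ}, P σ → P σ⁻¹)
    {q : G} (hq : P q) :
    (Finset.univ.filter (fun σ => P σ)).image (fun σ => q * σ) = Finset.univ.filter (fun σ => P σ) := by
  apply Finset.Subset.antisymm
  · intro y hy
    simp only [Finset.mem_image, Finset.mem_filter, Finset.mem_univ, true_and] at hy ⊢
    obtain ⟨x, hx, rfl⟩ := hy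
    exact hmul hq hx
  · intro y hy
    simp only [Finset.mem_image, Finset.mem_filter, Finset.mem_univ, true_and] at hy ⊢
    exact ⟨q⁻¹ * y, hmul (hinv hq) hy, by group⟩

lemma filter_image_right {G : Type*} [Group G] [Fintype G] [DecidableEq G] (P : G → Prop)
    (hmul : ∀ {σ τ}, P σ → P τ → P (σ * τ)) (hinv : ∀ {σ}, P σ → P σ⁻¹)
    {q : G} (hq : P q) :
    (Finset.univ.filter (fun σ => P σ)).image (fun σ => σ * q) = Finset.univ.filter (fun σ => P σ) := by
  apply Finset.Subset.antisymm
  · intro y hy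
    simp only [Finset.mem_image, Finset.mem_filter, Finset.mem_univ, true_and] at hy ⊢
    obtain ⟨x, hx, rfl⟩ := hy
    exact hmul hx hq
  · intro y hy
    simp only [Finset.mem_image, Finset.mem_filter, Finset.mem_univ, true_and] at hy ⊢
    exact ⟨y * q⁻¹, hmul hy (hinv hq), by group⟩
end

section
variable {A : Type*} [Fintype A] [DecidableEq A] {μ : YoungDiagram}

lemma stab_swap (f : μ.cells → ℕ) (T : μ.cells → A) (hT : Function.Injective T)
    (c₁ c₂ : μ.cells) (h : f c₁ = f c₂) :
    StabPred f T (Equiv.swap (T c₁) (T c₂)) := by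
  constructor
  · intro x hx
    exact Equiv.swap_apply_of_ne_of_ne (Ne.symm (hx c₁)) (Ne.symm (hx c₂))
  · intro c
    by_cases h1 : T c = T c₁
    · refine ⟨c₂, ?_, ?_⟩
      · rw [← h]; exact congrArg f (hT h1).symm
      · rw [h1, Equiv.swap_apply_left]
    by_cases h2 : T c = T c₂
    · refine ⟨c₁, ?_, ?_⟩
      · rw [h]; exact congrArg f (hT h2).symm
      · rw [h2, Equiv.swap_apply_right]
    · exact ⟨c, rfl, Equiv.swap_apply_of_ne_of_ne h1 h2⟩

variable (K : Type*) [Field K]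

lemma aRow_eq (T : μ.cells → A) :
    aRow K μ T = ∑ σ ∈ Finset.univ.filter
      (fun σ => StabPred (fun c => (c : ℕ × ℕ).1) T σ), MonoidAlgebra.single σ (1 : K) := by
  unfold aRow
  refine Finset.sum_congr ?_ fun _ _ => rfl
  ext σ
  simp [StabPred, Finset.mem_filter]

lemma bCol_eq (T : μ.cells → A) :
    bCol K μ T = ∑ τ ∈ Finset.univ.filter
      (fun τ => StabPred (fun c => (c : ℕ × ℕ).2) T τ),
        MonoidAlgebra.single τ ((Equiv.Perm.sign τ : ℤ) : K) := by
  unfold bCol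
  refine Finset.sum_congr ?_ fun _ _ => rfl
  ext σ
  simp [StabPred, Finset.mem_filter]

lemma single_mul_aRow (T : μ.cells → A) {q : Equiv.Perm A}
    (hq : StabPred (fun c => (c : ℕ × ℕ).1) T q) :
    MonoidAlgebra.single q (1 : K) * aRow K μ T = aRow K μ T := by
  rw [aRow_eq, Finset.mul_sum]
  simp_rw [MonoidAlgebra.single_mul_single, one_mul]
  have h := Finset.sum_image (s := Finset.univ.filter
      (fun σ => StabPred (fun c => (c : ℕ × ℕ).1) T σ))
      (f := fun σ => MonoidAlgebra.single σ (1 : K)) (g := fun σ => q * σ)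
      (fun x _ y _ hxy => mul_left_cancel hxy)
  rw [← h, filter_image_left _ (fun hσ hτ => stab_mul hσ hτ) (fun hσ => stab_inv hσ) hq]

lemma bCol_mul_single (T : μ.cells → A) {p : Equiv.Perm A}
    (hp : StabPred (fun c => (c : ℕ × ℕ).2) T p) :
    bCol K μ T * MonoidAlgebra.single p ((Equiv.Perm.sign p : ℤ) : K) = bCol K μ T := by
  rw [bCol_eq, Finset.sum_mul]
  simp_rw [MonoidAlgebra.single_mul_single]
  have hcoef : ∀ τ : Equiv.Perm A,
      ((Equiv.Perm.sign τ : ℤ) : K) * ((Equiv.Perm.sign p : ℤ) : K)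
        = ((Equiv.Perm.sign (τ * p) : ℤ) : K) := by
    intro τ; rw [map_mul]; push_cast; ring
  simp_rw [hcoef]
  have h := Finset.sum_image (s := Finset.univ.filter
      (fun σ => StabPred (fun c => (c : ℕ × ℕ).2) T σ))
      (f := fun σ => MonoidAlgebra.single σ ((Equiv.Perm.sign σ : ℤ) : K))
      (g := fun σ => σ * p)
      (fun x _ y _ hxy => mul_right_cancel hxy)
  rw [← h, filter_image_right _ (fun hσ hτ => stab_mul hσ hτ) (fun hσ => stab_inv hσ) hp]
end

/-- for entries `b₁, …, b_k` of `S` in strictly increasing distinct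
columns with `b₁, b₂` in different rows, and `σ = (a,b₁)(a,b₂)⋯(a,b_k)`, one has
`c_μ(S)·σ·c_μ(S) = 0`. -/
theorem youngSymm_cycle_zero (K : Type*) [Field K] [CharZero K] {A : Type*} [Fintype A]
    [DecidableEq A] (μ : YoungDiagram) (S : μ.cells → A) (hS : Function.Injective S)
    (a : A) (ha : ∀ c : μ.cells, S c ≠ a)
    (k : ℕ) (hk : 2 ≤ k) (c : Fin k → μ.cells)
    (hcols : StrictMono fun t => (c t : ℕ × ℕ).2)
    (hrows : (c ⟨0, by omega⟩ : ℕ × ℕ).1 ≠ (c ⟨1, by omega⟩ : ℕ × ℕ).1) :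
    youngSymm K μ S *
        MonoidAlgebra.single ((List.ofFn fun t => Equiv.swap a (S (c t))).prod) (1 : K) *
        youngSymm K μ S = 0 := by
  obtain ⟨k', rfl⟩ : ∃ k', k = k' + 2 := ⟨k - 2, by omega⟩
  have h01 : (0 : Fin (k' + 2)) < 1 := by simp [Fin.lt_def]
  have hrows' : (c 0 : ℕ × ℕ).1 ≠ (c 1 : ℕ × ℕ).1 := by
    have e0 : (⟨0, by omega⟩ : Fin (k' + 2)) = 0 := by ext; simp
    have e1 : (⟨1, by omega⟩ : Fin (k' + 2)) = 1 := by ext; simp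
    rw [e0, e1] at hrows; exact hrows
  have hj : (c 0 : ℕ × ℕ).2 < (c 1 : ℕ × ℕ).2 := hcols h01
  have hcinj : Function.Injective c := fun s t h => hcols.injective (by rw [h])
  have hbinj : Function.Injective fun t : Fin (k' + 2) => S (c t) :=
    fun s t h => hcinj (hS h)
  set σp : Equiv.Perm A := (List.ofFn fun t => Equiv.swap a (S (c t))).prod with hσp
  set l : List A := List.ofFn fun t : Fin (k' + 2) => S (c t) with hldef
  have hmap : σp = (l.map fun b => Equiv.swap a b).prod := by
    rw [hσp, hldef, List.map_ofFn]; rfl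
  have hnd : l.Nodup := List.nodup_ofFn.mpr hbinj
  have hal : a ∉ l := by
    simp only [hldef, List.mem_ofFn, Set.mem_range, not_exists]
    intro t h
    exact ha (c t) h
  have hl : l = S (c 0) :: S (c 1) :: List.ofFn (fun i : Fin k' => S (c i.succ.succ)) := by
    rw [hldef, List.ofFn_succ, List.ofFn_succ, Fin.succ_zero_eq_one]
  -- the auxiliary cell x in column of c 0 and row of c 1
  have hx_mem : ((c 1 : ℕ × ℕ).1, (c 0 : ℕ × ℕ).2) ∈ μ := by
    have h1 : ((c 1 : ℕ × ℕ).1, (c 1 : ℕ × ℕ).2) ∈ μ := by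
      rw [Prod.mk.eta]
      exact (μ.mem_cells _).mp (c 1).2
    exact μ.up_left_mem le_rfl hj.le h1
  set cx : μ.cells := ⟨((c 1 : ℕ × ℕ).1, (c 0 : ℕ × ℕ).2), (μ.mem_cells _).mpr hx_mem⟩
    with hcx
  have hx0 : cx ≠ c 0 := by
    intro h
    apply hrows'
    have := congrArg (fun z : μ.cells => (z : ℕ × ℕ).1) h
    simpa [hcx] using this.symm
  have hx1 : cx ≠ c 1 := by
    intro h
    have := congrArg (fun z : μ.cells => (z : ℕ × ℕ).2) h
    simp only [hcx] at this
    omega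
  have hxl : S cx ∉ l := by
    simp only [hldef, List.mem_ofFn, Set.mem_range, not_exists]
    intro t h
    have hct : c t = cx := hS h
    have h2 : (fun t => (c t : ℕ × ℕ).2) t = (fun t => (c t : ℕ × ℕ).2) 0 := by
      simp only [hct, hcx]
    have ht0 : t = 0 := hcols.injective h2
    rw [ht0] at hct
    exact hx0 hct.symm
  have hσx : σp (S cx) = S cx := by
    rw [hmap]
    exact swapProd_fixed a l (S cx) (ha cx) hxl
  have hσb : σp (S (c 1)) = S (c 0) := by
    rw [hmap, hl]
    exact swapProd_val a _ _ _ (hl ▸ hal) (hl ▸ hnd)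
  set p : Equiv.Perm A := Equiv.swap (S (c 0)) (S cx) with hpdef
  set q : Equiv.Perm A := Equiv.swap (S (c 1)) (S cx) with hqdef
  have hp : StabPred (fun c : μ.cells => (c : ℕ × ℕ).2) S p :=
    stab_swap _ S hS (c 0) cx rfl
  have hq : StabPred (fun c : μ.cells => (c : ℕ × ℕ).1) S q :=
    stab_swap _ S hS (c 1) cx rfl
  have hconj : σp * q = p * σp := by
    have h := Equiv.swap_apply_apply σp (S (c 1)) (S cx)
    rw [hσb, hσx] at h
    rw [hpdef, h, hqdef]
    group
  have hsgn : Equiv.Perm.sign p = -1 := by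
    refine Equiv.Perm.sign_swap ?_
    intro h
    exact hx0 (hS h).symm
  have h2 : bCol K μ S * MonoidAlgebra.single p (1 : K) = -(bCol K μ S) := by
    have hb := bCol_mul_single K S hp
    rw [hsgn] at hb
    push_cast at hb
    have hs : MonoidAlgebra.single p (-1 : K) = -MonoidAlgebra.single p (1 : K) :=
      MonoidAlgebra.single_neg p 1
    rw [hs, mul_neg] at hb
    exact neg_eq_iff_eq_neg.mp hb
  have key : bCol K μ S * MonoidAlgebra.single σp (1 : K) * aRow K μ S = 0 := by
    have e : bCol K μ S * MonoidAlgebra.single σp (1 : K) * aRow K μ S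
        = -(bCol K μ S * MonoidAlgebra.single σp (1 : K) * aRow K μ S) := by
      conv_lhs => rw [← single_mul_aRow K S hq]
      calc bCol K μ S * MonoidAlgebra.single σp (1 : K) *
              (MonoidAlgebra.single q (1 : K) * aRow K μ S)
          = bCol K μ S * (MonoidAlgebra.single σp (1 : K) * MonoidAlgebra.single q (1 : K)) *
              aRow K μ S := by noncomm_ring
        _ = bCol K μ S * MonoidAlgebra.single (σp * q) (1 : K) * aRow K μ S := by
            rw [MonoidAlgebra.single_mul_single, one_mul]
        _ = bCol K μ S * MonoidAlgebra.single (p * σp) (1 : K) * aRow K μ S := by rw [hconj]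
        _ = bCol K μ S * (MonoidAlgebra.single p (1 : K) * MonoidAlgebra.single σp (1 : K)) *
              aRow K μ S := by rw [MonoidAlgebra.single_mul_single, one_mul]
        _ = (bCol K μ S * MonoidAlgebra.single p (1 : K)) * MonoidAlgebra.single σp (1 : K) *
              aRow K μ S := by noncomm_ring
        _ = -(bCol K μ S) * MonoidAlgebra.single σp (1 : K) * aRow K μ S := by rw [h2]
        _ = -(bCol K μ S * MonoidAlgebra.single σp (1 : K) * aRow K μ S) := by noncomm_ring
    set X := bCol K μ S * MonoidAlgebra.single σp (1 : K) * aRow K μ S with hXdef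
    have h2X : (2 : K) • X = 0 := by
      rw [two_smul]
      nth_rewrite 1 [e]
      exact neg_add_cancel X
    calc X = (2 : K)⁻¹ • ((2 : K) • X) := by
          rw [smul_smul, inv_mul_cancel₀ (two_ne_zero), one_smul]
      _ = 0 := by rw [h2X, smul_zero]
  calc youngSymm K μ S * MonoidAlgebra.single σp (1 : K) * youngSymm K μ S
      = aRow K μ S * (bCol K μ S * MonoidAlgebra.single σp (1 : K) * aRow K μ S) *
          bCol K μ S := by rw [youngSymm]; noncomm_ring
    _ = 0 := by rw [key]; simp
end
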